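/- Let K and k_1,…,k_t be positive integers with k_1+⋯+k_t = 2K. On the candidate set {a,b,c} with tie-breaking order c ≻ a ≻ b, let P be the weighted profile consisting of weight 4K of the vote a≻b≻c, weight 4K of a≻c≻b, weight K of b≻a≻c, and weight 9K of b≻c≻a, and let there be t manipulators where manipulator i casts one vote of weight 2k_i. Consider the runoff combination plurality+cup, with the cup agenda pairing a against b first, the winner then meeting c. Then there exists a choice of manipulator votes making c the plurality+cup winner of the combined weighted profile if and only if there exists S ⊆ {1,…,t} with Σ_{i∈S} k_i = K. -/

import Mathlib

/-
Weighted voting on the three-candidate set {a, b, c}. A weighted profile is a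
finite list of pairs (vote, weight), where a vote is a duplicate-free list of
all three candidates (earlier = more preferred) and the weight is a positive
natural number. `T` always denotes the tie-breaking (strict linear) order.
-/

inductive Cand : Type
  | a | b | c
  deriving DecidableEq

instance : Fintype Cand where
  elems := {Cand.a, Cand.b, Cand.c}
  complete := fun x => by cases x <;> decide

/-- A weighted profile: a list of (vote, weight) pairs. -/
abbrev WProfile := List (List Cand × ℕ)

/-- The total weight `n` of a weighted profile. -/
def totalW (P : WProfile) : ℕ := (P.map Prod.snd).sum

/-- `N P x y`: the total weight of votes in `P` ranking `x` above `y`. -/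
def Nw (P : WProfile) (x y : Cand) : ℕ :=
  ((P.filter fun p => p.1.idxOf x < p.1.idxOf y).map Prod.snd).sum

/-- The `k`-approval score of `e`: the total weight of votes ranking `e`
among the top `k` positions. -/
def kApproval (P : WProfile) (k : ℕ) (e : Cand) : ℕ :=
  ((P.filter fun p => p.1.idxOf e < k).map Prod.snd).sum

/-- The Bucklin score of `e`: the least `k` such that the `k`-approval score
of `e` is strictly greater than half the total weight. -/
noncomputable def bucklinScore (P : WProfile) (e : Cand) : ℕ :=
  sInf {k | totalW P < 2 * kApproval P k e}

/-- `v` is a vote: a strict linear order of all three candidates. -/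
def ValidVote (v : List Cand) : Prop := v.Nodup ∧ v.toFinset = Finset.univ

/-- A valid weighted profile: every vote is a linear order and every weight is
positive. -/
def ValidWProfile (P : WProfile) : Prop := ∀ p ∈ P, ValidVote p.1 ∧ 0 < p.2

/-- The `T`-greatest candidate among the maximisers of `f`. -/
def argmaxT (T : LinearOrder Cand) (f : Cand → ℕ) : Cand :=
  @Finset.max' Cand T (Finset.univ.filter fun e => ∀ z, f z ≤ f e) (by
    obtain ⟨w, hw, hm⟩ := Finset.exists_max_image Finset.univ f ⟨Cand.a, Finset.mem_univ _⟩
    exact ⟨w, Finset.mem_filter.2 ⟨Finset.mem_univ _, fun z => hm z (Finset.mem_univ _)⟩⟩)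

/-- The `T`-greatest candidate among the minimisers of `f`. -/
def argminT (T : LinearOrder Cand) (f : Cand → ℕ) : Cand :=
  @Finset.max' Cand T (Finset.univ.filter fun e => ∀ z, f e ≤ f z) (by
    obtain ⟨w, hw, hm⟩ := Finset.exists_min_image Finset.univ f ⟨Cand.a, Finset.mem_univ _⟩
    exact ⟨w, Finset.mem_filter.2 ⟨Finset.mem_univ _, fun z => hm z (Finset.mem_univ _)⟩⟩)

/-- The plurality score of `e`: the total weight of votes ranking `e` first. -/
def pluralityScore (P : WProfile) (e : Cand) : ℕ :=
  ((P.filter fun p => p.1.head? = some e).map Prod.snd).sum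

/-- The plurality winner. -/
def pluralityWinner (T : LinearOrder Cand) (P : WProfile) : Cand :=
  argmaxT T (pluralityScore P)

/-- The Copeland score of `x`: the number of candidates `z ≠ x` with
`N(x,z) > N(z,x)`. -/
def copelandScore (P : WProfile) (x : Cand) : ℕ :=
  (Finset.univ.filter fun z => z ≠ x ∧ Nw P z x < Nw P x z).card

/-- The Copeland winner. -/
def copelandWinner (T : LinearOrder Cand) (P : WProfile) : Cand :=
  argmaxT T (copelandScore P)

/-- The maximin score of `x`: the minimum of `N(x,z)` over `z ≠ x`. -/
def maximinScore (P : WProfile) (x : Cand) : ℕ :=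
  (((Finset.univ : Finset Cand).erase x).image fun z => Nw P x z).min' (by
    apply Finset.Nonempty.image
    cases x <;> decide)

/-- The maximin winner. -/
def maximinWinner (T : LinearOrder Cand) (P : WProfile) : Cand :=
  argmaxT T (maximinScore P)

/-- The Bucklin winner: the `T`-greatest candidate of minimal Bucklin score. -/
noncomputable def bucklinWinner (T : LinearOrder Cand) (P : WProfile) : Cand :=
  argminT T (bucklinScore P)

/-- Winner of the pairwise contest between `x` and `z` (the `T`-greater
candidate winning on a tie). -/
def pairWin (T : LinearOrder Cand) (P : WProfile) (x z : Cand) : Cand :=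
  if Nw P z x < Nw P x z then x
  else if Nw P x z < Nw P z x then z
  else if T.lt x z then z else x

/-- The candidate other than the two (distinct) given ones. -/
def third (x y : Cand) : Cand :=
  if Cand.a ≠ x ∧ Cand.a ≠ y then Cand.a
  else if Cand.b ≠ x ∧ Cand.b ≠ y then Cand.b
  else Cand.c

/-- The cup winner for the agenda in which `p` and `q` meet first and the
winner then meets the remaining candidate. -/
def cupWinner (T : LinearOrder Cand) (p q : Cand) (P : WProfile) : Cand :=
  pairWin T P (pairWin T P p q) (third p q)

/-- Run-off combination `X + Y`: the common winner if `X` and `Y` agree;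
otherwise the pairwise-majority winner between the two winners, with the
`T`-greater candidate winning a tied run-off. -/
def runoffWinner (T : LinearOrder Cand) (X Y : WProfile → Cand) (P : WProfile) : Cand :=
  let x := X P
  let y := Y P
  if x = y then x
  else if Nw P y x < Nw P x y then x
  else if Nw P x y < Nw P y x then y
  else if T.lt x y then y else x

/-- Tie-breaking priority realising the order c ≻ a ≻ b. -/
def prio : Cand → ℕ
  | .a => 1
  | .b => 0
  | .c => 2

/-- The tie-breaking order c ≻ a ≻ b. -/
def Tcab : LinearOrder Cand := LinearOrder.lift' prio (by decide)

/-- The non-manipulators' profile: weight 4K of a≻b≻c, 4K of a≻c≻b,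
K of b≻a≻c and 9K of b≻c≻a. -/
def P14 (K : ℕ) : WProfile :=
  [([Cand.a, Cand.b, Cand.c], 4 * K), ([Cand.a, Cand.c, Cand.b], 4 * K),
   ([Cand.b, Cand.a, Cand.c], K), ([Cand.b, Cand.c, Cand.a], 9 * K)]

/-!
Without the manipulators, a, b, c have plurality scores 8K, 10K, 0; a and c are tied
9K : 9K, and b beats c by 14K : 4K. The manipulators carry 4K in total, so (for K > 0)
c cannot win plurality and must beat the plurality winner in the run-off; against b this
is hopeless, so the plurality winner is a. Overtaking b needs manipulator weight at least
2K ranking a first, while c not losing to a allows at most 2K ranking a above c, so the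
manipulators ranking a first weigh exactly 2K. Conversely, if the `k i` over `S` sum to K,
let `S` vote a ≻ c ≻ b and the rest c ≻ a ≻ b: then a and b tie at 10K in plurality and
a wins the tie-break, a beats b 12K : 10K, and c ties a at 11K in both the cup final and
the run-off, winning both tie-breaks.
-/

open Finset

theorem List.sum_map_filter_ofFn {α M : Type*} [AddCommMonoid M] {n : ℕ} (f : Fin n → α)
    (p : α → Bool) (g : α → M) :
    (((List.ofFn f).filter p).map g).sum = ∑ i with p (f i), g (f i) := by
  rw [sum_filter]
  induction n with
  | zero => simp
  | succ n ih =>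
    rw [List.ofFn_succ, Fin.sum_univ_succ, ← ih]
    by_cases h : p (f 0) <;> simp [h]

theorem Finset.sum_filter_ite_mem {ι α M : Type*} [Fintype ι] [DecidableEq ι] [AddCommMonoid M]
    (S : Finset ι) (u u' : α) (p : α → Prop) [DecidablePred p] (f : ι → M) :
    ∑ i with p (if i ∈ S then u else u'), f i =
      (if p u then ∑ i ∈ S, f i else 0) + (if p u' then ∑ i ∈ Sᶜ, f i else 0) := by
  rw [sum_filter, ← sum_add_sum_compl S]
  congr 1
  · rw [sum_congr rfl fun i hi => by rw [if_pos hi]]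
    split_ifs <;> simp
  · rw [sum_congr rfl fun i hi => by rw [if_neg (mem_compl.1 hi)]]
    split_ifs <;> simp

theorem Nw_append (P Q : WProfile) (x y : Cand) : Nw (P ++ Q) x y = Nw P x y + Nw Q x y := by
  simp [Nw, List.filter_append]

theorem pluralityScore_append (P Q : WProfile) (e : Cand) :
    pluralityScore (P ++ Q) e = pluralityScore P e + pluralityScore Q e := by
  simp [pluralityScore, List.filter_append]

theorem Nw_ofFn {t : ℕ} (v : Fin t → List Cand) (w : Fin t → ℕ) (x y : Cand) :
    Nw (List.ofFn fun i => (v i, w i)) x y = ∑ i with (v i).idxOf x < (v i).idxOf y, w i := by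
  simp only [Nw, List.sum_map_filter_ofFn, decide_eq_true_eq]

theorem pluralityScore_ofFn {t : ℕ} (v : Fin t → List Cand) (w : Fin t → ℕ) (e : Cand) :
    pluralityScore (List.ofFn fun i => (v i, w i)) e = ∑ i with (v i).head? = some e, w i := by
  simp only [pluralityScore, List.sum_map_filter_ofFn, decide_eq_true_eq]

theorem Nw_P14_ab (K : ℕ) : Nw (P14 K) .a .b = 8 * K := by simp +decide [Nw, P14]; ring
theorem Nw_P14_ba (K : ℕ) : Nw (P14 K) .b .a = 10 * K := by simp +decide [Nw, P14]; ring
theorem Nw_P14_ac (K : ℕ) : Nw (P14 K) .a .c = 9 * K := by simp +decide [Nw, P14]; ring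
theorem Nw_P14_ca (K : ℕ) : Nw (P14 K) .c .a = 9 * K := by simp +decide [Nw, P14]
theorem Nw_P14_bc (K : ℕ) : Nw (P14 K) .b .c = 14 * K := by simp +decide [Nw, P14]; ring
theorem Nw_P14_cb (K : ℕ) : Nw (P14 K) .c .b = 4 * K := by simp +decide [Nw, P14]
theorem pluralityScore_P14_a (K : ℕ) : pluralityScore (P14 K) .a = 8 * K := by
  simp +decide [pluralityScore, P14]; ring
theorem pluralityScore_P14_b (K : ℕ) : pluralityScore (P14 K) .b = 10 * K := by
  simp +decide [pluralityScore, P14]; ring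
theorem pluralityScore_P14_c (K : ℕ) : pluralityScore (P14 K) .c = 0 := by
  simp +decide [pluralityScore, P14]

theorem ValidVote.idxOf_lt_iff_not_lt {v : List Cand} (hv : ValidVote v) {x y : Cand}
    (hxy : x ≠ y) :
    v.idxOf y < v.idxOf x ↔ ¬ v.idxOf x < v.idxOf y := by
  have hx : x ∈ v := by simp [← List.mem_toFinset, hv.2]
  have hne : v.idxOf x ≠ v.idxOf y := fun h => hxy ((List.idxOf_inj hx).1 h)
  omega

theorem List.idxOf_lt_of_head?_eq {α : Type*} [BEq α] [LawfulBEq α] {v : List α} {x y : α}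
    (h : v.head? = some x) (hxy : x ≠ y) : v.idxOf x < v.idxOf y := by
  obtain ⟨r, rfl⟩ : ∃ r, v = x :: r := by
    cases v with
    | nil => cases h
    | cons z r => exact ⟨r, by rw [Option.some_injective _ h]⟩
  rw [List.idxOf_cons_self, List.idxOf_cons_ne r hxy]
  exact Nat.succ_pos _

theorem pairWin_eq_left {T : LinearOrder Cand} {P : WProfile} {x z : Cand}
    (h : Nw P z x ≤ Nw P x z) (hT : T.le z x) : pairWin T P x z = x := by
  let _ := T
  unfold pairWin
  split_ifs with h₁ h₂ h₃
  · rfl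
  · omega
  · exact absurd h₃ (not_lt.2 hT)
  · rfl

theorem pairWin_eq_right {T : LinearOrder Cand} {P : WProfile} {x z : Cand}
    (h : Nw P x z ≤ Nw P z x) (hT : T.le x z) : pairWin T P x z = z := by
  unfold pairWin
  split_ifs with h₁ h₂ h₃
  · omega
  · rfl
  · rfl
  · let _ := T
    exact le_antisymm hT (not_lt.1 h₃)

theorem runoffWinner_eq_right {T : LinearOrder Cand} {X Y : WProfile → Cand} {P : WProfile}
    (h : Nw P (X P) (Y P) ≤ Nw P (Y P) (X P)) (hT : T.le (X P) (Y P)) :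
    runoffWinner T X Y P = Y P := by
  let _ := T
  simp only [runoffWinner]
  split_ifs with h₁ h₂ h₃ h₄
  · exact h₁
  · omega
  · rfl
  · rfl
  · exact le_antisymm hT (not_lt.1 h₄)

theorem right_eq_and_Nw_le_of_runoffWinner_eq {T : LinearOrder Cand} {X Y : WProfile → Cand}
    {P : WProfile} {w : Cand} (h : runoffWinner T X Y P = w) (hX : X P ≠ w) :
    Y P = w ∧ Nw P (X P) w ≤ Nw P w (X P) := by
  simp only [runoffWinner] at h
  split_ifs at h with h₁ h₂ h₃ h₄ <;> subst h
  · exact absurd rfl hX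
  · exact absurd rfl hX
  · exact ⟨rfl, h₃.le⟩
  · exact ⟨rfl, by omega⟩
  · exact absurd rfl hX

theorem argmaxT_isMax (T : LinearOrder Cand) (f : Cand → ℕ) (z : Cand) :
    f z ≤ f (argmaxT T f) := by
  have hmem : argmaxT T f ∈ univ.filter fun e => ∀ z, f z ≤ f e := @max'_mem Cand T _ _
  exact (mem_filter.1 hmem).2 z

theorem argmaxT_ne_of_le_of_lt {T : LinearOrder Cand} {f : Cand → ℕ} {x y : Cand}
    (hf : f y ≤ f x) (hT : T.lt y x) : argmaxT T f ≠ y := by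
  let _ := T
  intro h
  have hx : x ∈ univ.filter fun e => ∀ z, f z ≤ f e :=
    mem_filter.2 ⟨mem_univ _, fun z => (h ▸ argmaxT_isMax T f z).trans hf⟩
  exact absurd (h ▸ le_max' _ x hx) (not_le.2 hT)

theorem pluralityScore_le_pluralityWinner (T : LinearOrder Cand) (P : WProfile) (z : Cand) :
    pluralityScore P z ≤ pluralityScore P (pluralityWinner T P) :=
  argmaxT_isMax T _ z

theorem Tcab_le_c (x : Cand) : Tcab.le x .c := by cases x <;> decide

theorem pluralityWinner_manipulated_ne_c {K t : ℕ} (hK : 0 < K) {k : Fin t → ℕ}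
    (hsum : ∑ i, k i = 2 * K) (v : Fin t → List Cand) :
    pluralityWinner Tcab (P14 K ++ List.ofFn fun i => (v i, 2 * k i)) ≠ .c := by
  intro h
  have hbc := pluralityScore_le_pluralityWinner Tcab
    (P14 K ++ List.ofFn fun i => (v i, 2 * k i)) .b
  rw [h, pluralityScore_append, pluralityScore_append, pluralityScore_P14_b,
    pluralityScore_P14_c, pluralityScore_ofFn, pluralityScore_ofFn] at hbc
  have hc : ∑ i with (v i).head? = some .c, 2 * k i ≤ ∑ i, 2 * k i :=
    sum_le_sum_of_subset (filter_subset _ _)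
  rw [← mul_sum univ, hsum] at hc
  omega

theorem exists_subset_sum_eq_of_runoffWinner_eq_c {K t : ℕ} {k : Fin t → ℕ}
    (hsum : ∑ i, k i = 2 * K) {v : Fin t → List Cand} (hv : ∀ i, ValidVote (v i))
    (hwin : runoffWinner Tcab (pluralityWinner Tcab) (cupWinner Tcab .a .b)
      (P14 K ++ List.ofFn fun i => (v i, 2 * k i)) = .c) :
    ∃ S : Finset (Fin t), ∑ i ∈ S, k i = K := by
  obtain rfl | hK := K.eq_zero_or_pos
  · exact ⟨∅, rfl⟩
  set P := P14 K ++ List.ofFn fun i => (v i, 2 * k i) with hP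
  have htotal : ∑ i, 2 * k i = 4 * K := by rw [← mul_sum, hsum]; ring
  have hc := pluralityWinner_manipulated_ne_c hK hsum v
  obtain ⟨-, hrun⟩ := right_eq_and_Nw_le_of_runoffWinner_eq hwin hc
  cases hp : pluralityWinner Tcab P with
  | c => exact absurd hp hc
  | b =>
    rw [hp, hP, Nw_append, Nw_append, Nw_P14_bc, Nw_P14_cb, Nw_ofFn, Nw_ofFn] at hrun
    have hcb : ∑ i with (v i).idxOf .c < (v i).idxOf .b, 2 * k i ≤ ∑ i, 2 * k i :=
      sum_le_sum_of_subset (filter_subset _ _)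
    omega
  | a =>
    rw [hp, hP, Nw_append, Nw_append, Nw_P14_ac, Nw_P14_ca, Nw_ofFn, Nw_ofFn] at hrun
    have hab := pluralityScore_le_pluralityWinner Tcab P .b
    rw [hp, hP, pluralityScore_append, pluralityScore_append, pluralityScore_P14_a,
      pluralityScore_P14_b, pluralityScore_ofFn, pluralityScore_ofFn] at hab
    have hsplit : ∑ i with (v i).idxOf .a < (v i).idxOf .c, 2 * k i
        + ∑ i with (v i).idxOf .c < (v i).idxOf .a, 2 * k i = 4 * K := by
      rw [← htotal,
        ← sum_filter_add_sum_filter_not univ fun i => (v i).idxOf .a < (v i).idxOf .c]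
      congr 2
      ext i
      simp only [mem_filter, (hv i).idxOf_lt_iff_not_lt (by decide : Cand.a ≠ .c)]
    have htop : ∑ i with (v i).head? = some .a, 2 * k i
        ≤ ∑ i with (v i).idxOf .a < (v i).idxOf .c, 2 * k i :=
      sum_le_sum_of_subset fun i => by
        simpa using fun h => List.idxOf_lt_of_head?_eq h (by decide)
    refine ⟨univ.filter fun i => (v i).head? = some .a, ?_⟩
    have hdouble : 2 * ∑ i with (v i).head? = some .a, k i
        = ∑ i with (v i).head? = some .a, 2 * k i := mul_sum _ _ _
    omega

theorem runoffWinner_eq_c_of_subset_sum_eq {K t : ℕ} {k : Fin t → ℕ}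
    (hsum : ∑ i, k i = 2 * K) {S : Finset (Fin t)} (hS : ∑ i ∈ S, k i = K) :
    runoffWinner Tcab (pluralityWinner Tcab) (cupWinner Tcab .a .b)
      (P14 K ++ List.ofFn fun i =>
        (if i ∈ S then [.a, .c, .b] else [.c, .a, .b], 2 * k i)) = .c := by
  set P := P14 K ++ List.ofFn fun i =>
    (if i ∈ S then [Cand.a, .c, .b] else [.c, .a, .b], 2 * k i) with hP
  have hSc : ∑ i ∈ Sᶜ, k i = K := by
    have := sum_add_sum_compl S k
    omega
  have hN (x y : Cand) : Nw P x y = Nw (P14 K) x y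
      + ((if [Cand.a, .c, .b].idxOf x < [Cand.a, .c, .b].idxOf y then 2 * K else 0)
        + (if [Cand.c, .a, .b].idxOf x < [Cand.c, .a, .b].idxOf y then 2 * K else 0)) := by
    rw [hP, Nw_append, Nw_ofFn, sum_filter_ite_mem S _ _ fun v : List Cand => v.idxOf x < v.idxOf y,
      ← mul_sum, ← mul_sum, hS, hSc]
  have hplur (e : Cand) : pluralityScore P e = pluralityScore (P14 K) e
      + ((if [Cand.a, .c, .b].head? = some e then 2 * K else 0)
        + (if [Cand.c, .a, .b].head? = some e then 2 * K else 0)) := by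
    rw [hP, pluralityScore_append, pluralityScore_ofFn,
      sum_filter_ite_mem S _ _ fun v : List Cand => v.head? = some e,
      ← mul_sum, ← mul_sum, hS, hSc]
  have hac : Nw P .a .c = Nw P .c .a := by
    simp +decide only [hN, Nw_P14_ac, Nw_P14_ca, ↓reduceIte]
    omega
  have hab : Nw P .b .a ≤ Nw P .a .b := by
    simp +decide only [hN, Nw_P14_ab, Nw_P14_ba, ↓reduceIte]
    omega
  have hba : pluralityScore P .b ≤ pluralityScore P .a := by
    simp +decide only [hplur, pluralityScore_P14_a, pluralityScore_P14_b, ↓reduceIte]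
    omega
  have hcup : cupWinner Tcab .a .b P = .c := by
    rw [cupWinner, pairWin_eq_left hab (by decide), show third .a .b = .c from rfl,
      pairWin_eq_right hac.le (Tcab_le_c _)]
  have hrun : Nw P (pluralityWinner Tcab P) .c ≤ Nw P .c (pluralityWinner Tcab P) := by
    have hb : pluralityWinner Tcab P ≠ .b := argmaxT_ne_of_le_of_lt hba (by decide)
    cases hp : pluralityWinner Tcab P with
    | a => exact hac.le
    | b => exact absurd hp hb
    | c => exact le_rfl
  exact (runoffWinner_eq_right (by rwa [hcup]) (hcup ▸ Tcab_le_c _)).trans hcup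

theorem plurality_cup_partition_general
    (K : ℕ) (t : ℕ) (k : Fin t → ℕ)
    (hsum : ∑ i, k i = 2 * K) :
    (∃ v : Fin t → List Cand, (∀ i, ValidVote (v i)) ∧
        runoffWinner Tcab (pluralityWinner Tcab) (cupWinner Tcab Cand.a Cand.b)
          (P14 K ++ List.ofFn fun i => (v i, 2 * k i)) = Cand.c) ↔
    (∃ S : Finset (Fin t), ∑ i ∈ S, k i = K) := by
  constructor
  · rintro ⟨v, hv, hwin⟩
    exact exists_subset_sum_eq_of_runoffWinner_eq_c hsum hv hwin
  · rintro ⟨S, hS⟩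
    refine ⟨fun i => if i ∈ S then [.a, .c, .b] else [.c, .a, .b], fun i => ?_,
      runoffWinner_eq_c_of_subset_sum_eq hsum hS⟩
    dsimp only
    split_ifs <;> exact ⟨by decide, by decide⟩

/-- Reduction from PARTITION to manipulating `plurality + cup` (agenda: `a`
meets `b`, the winner meets `c`; tie-breaking c ≻ a ≻ b): manipulators with
weights `2k₁, …, 2k_t` (where `k₁ + ⋯ + k_t = 2K`) can make `c` win iff the
`kᵢ` can be partitioned into two halves summing to `K`. -/
theorem plurality_cup_partition
    (K : ℕ) (hK : 0 < K) (t : ℕ) (k : Fin t → ℕ)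
    (hk : ∀ i, 0 < k i) (hsum : ∑ i, k i = 2 * K) :
    (∃ v : Fin t → List Cand, (∀ i, ValidVote (v i)) ∧
        runoffWinner Tcab (pluralityWinner Tcab) (cupWinner Tcab Cand.a Cand.b)
          (P14 K ++ List.ofFn fun i => (v i, 2 * k i)) = Cand.c) ↔
    (∃ S : Finset (Fin t), ∑ i ∈ S, k i = K) :=
  plurality_cup_partition_general K t k hsum
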